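/- arXiv:2512.02347 — 9 statements merged into one kernel-verified Lean document; each statement's English description precedes it below -/
import Mathlib

section
/- Let N be a finite nonempty set of players with value function v(S) = Σ_{i∈S} U_i − α|S|/R₀ − (β+γ)/R₀ for nonempty S ⊆ N (and v(∅)=0), where R₀ > 0, α > 0, β, γ ≥ 0. Then the game is convex: for all S₁, S₂ ⊆ N, v(S₁) + v(S₂) ≤ v(S₁ ∪ S₂) + v(S₁ ∩ S₂). -/
/-!
Each player contributes `U i - α / R₀` additively, and every nonempty coalition pays the
fixed cost `c = (β + γ) / R₀ ≥ 0` once. The additive part is modular; for the fixed cost,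
when `S₁, S₂` are nonempty so is `S₁ ∪ S₂`, and the bound `v S ≥ ∑_{i ∈ S} f i - c`, which
also holds for `S = ∅`, covers `S₁ ∩ S₂`.
-/

section FixedCostGame

variable {ι : Type*} {f : ι → ℝ} {c : ℝ} {v : Finset ι → ℝ}

lemma sum_sub_le_of_fixedCost (hc : 0 ≤ c) (hv0 : v ∅ = 0)
    (hv : ∀ S : Finset ι, S.Nonempty → v S = ∑ i ∈ S, f i - c) (S : Finset ι) :
    ∑ i ∈ S, f i - c ≤ v S := by
  rcases S.eq_empty_or_nonempty with rfl | hS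
  · simpa [hv0] using hc
  · exact (hv S hS).ge

theorem convex_of_fixedCost [DecidableEq ι] (hc : 0 ≤ c) (hv0 : v ∅ = 0)
    (hv : ∀ S : Finset ι, S.Nonempty → v S = ∑ i ∈ S, f i - c) (S₁ S₂ : Finset ι) :
    v S₁ + v S₂ ≤ v (S₁ ∪ S₂) + v (S₁ ∩ S₂) := by
  rcases S₁.eq_empty_or_nonempty with rfl | h₁
  · simp [hv0]
  rcases S₂.eq_empty_or_nonempty with rfl | h₂
  · simp [hv0]
  have h_inter := sum_sub_le_of_fixedCost hc hv0 hv (S₁ ∩ S₂)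
  have h_modular : ∑ i ∈ S₁ ∪ S₂, f i + ∑ i ∈ S₁ ∩ S₂, f i = ∑ i ∈ S₁, f i + ∑ i ∈ S₂, f i :=
    Finset.sum_union_inter
  rw [hv S₁ h₁, hv S₂ h₂, hv _ (h₁.mono Finset.subset_union_left)]
  linarith

end FixedCostGame

theorem stmt1_general {ι : Type*} [DecidableEq ι] (N : Finset ι)
    (U : ι → ℝ) (R₀ α β γ : ℝ) (hR₀ : 0 < R₀) (hβ : 0 ≤ β) (hγ : 0 ≤ γ)
    (v : Finset ι → ℝ) (hv0 : v ∅ = 0)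
    (hv : ∀ S : Finset ι, S.Nonempty →
      v S = ∑ i ∈ S, U i - α * S.card / R₀ - (β + γ) / R₀) :
    ∀ S₁ S₂ : Finset ι, S₁ ⊆ N → S₂ ⊆ N →
      v S₁ + v S₂ ≤ v (S₁ ∪ S₂) + v (S₁ ∩ S₂) := by
  have hv' : ∀ S : Finset ι, S.Nonempty →
      v S = ∑ i ∈ S, (U i - α / R₀) - (β + γ) / R₀ := by
    intro S hS
    rw [hv S hS, Finset.sum_sub_distrib, Finset.sum_const, nsmul_eq_mul, mul_div_assoc']
    ring
  intro S₁ S₂ _ _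
  exact convex_of_fixedCost (by positivity) hv0 hv' S₁ S₂

/-- The symmetric multicast game is convex. -/
theorem stmt1 {ι : Type*} [DecidableEq ι] (N : Finset ι) (hN : N.Nonempty)
    (U : ι → ℝ) (R₀ α β γ : ℝ) (hR₀ : 0 < R₀) (hα : 0 < α) (hβ : 0 ≤ β) (hγ : 0 ≤ γ)
    (v : Finset ι → ℝ) (hv0 : v ∅ = 0)
    (hv : ∀ S : Finset ι, S.Nonempty →
      v S = ∑ i ∈ S, U i - α * S.card / R₀ - (β + γ) / R₀) :
    ∀ S₁ S₂ : Finset ι, S₁ ⊆ N → S₂ ⊆ N →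
      v S₁ + v S₂ ≤ v (S₁ ∪ S₂) + v (S₁ ∩ S₂) :=
  stmt1_general N U R₀ α β γ hR₀ hβ hγ v hv0 hv
end

section
/- Let N = {1,…,n} with n ≥ 1, and let v(S) = Σ_{i∈S} U_i − α|S|/R₀ − (β+γ)/R₀ for nonempty S ⊆ N, v(∅) = 0, where R₀ > 0, α > 0, β, γ ≥ 0. Define the payoff profile x_i = U_i − α/R₀ − (β+γ)/(n·R₀) for each i ∈ N. Then (x_1, …, x_n) lies in the core: Σ_{i∈N} x_i = v(N) and Σ_{i∈S} x_i ≥ v(S) for every S ⊆ N. -/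
/-!
Write `v(S) = Σ_{i∈S} wᵢ - c` for nonempty `S`, with `wᵢ = Uᵢ - α/R₀` and the fixed transmission
cost `c = (β+γ)/R₀ ≥ 0`. The profile `xᵢ = wᵢ - c/n` splits `c` equally, so the grand coalition pays
exactly `c`, while a coalition `S` pays only the share `|S|·c/n ≤ c` of it.
-/

open Finset

namespace CoalitionalGame

variable {ι : Type*}

def IsInCore (N : Finset ι) (v : Finset ι → ℝ) (x : ι → ℝ) : Prop :=
  ∑ i ∈ N, x i = v N ∧ ∀ S ⊆ N, v S ≤ ∑ i ∈ S, x i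

lemma sum_sub_equalShare (S : Finset ι) (w : ι → ℝ) (c : ℝ) (n : ℕ) :
    ∑ i ∈ S, (w i - c / n) = ∑ i ∈ S, w i - #S * c / n := by
  rw [sum_sub_distrib, sum_const, nsmul_eq_mul, mul_div_assoc]

theorem isInCore_equalShare {N : Finset ι} (hN : N.Nonempty) {w : ι → ℝ} {c : ℝ} (hc : 0 ≤ c)
    {v : Finset ι → ℝ} (hv0 : v ∅ = 0)
    (hv : ∀ S : Finset ι, S.Nonempty → v S = ∑ i ∈ S, w i - c) :
    IsInCore N v (fun i => w i - c / #N) := by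
  have hcardN : (0 : ℝ) < #N := by exact_mod_cast hN.card_pos
  refine ⟨?efficient, fun S hS => ?rational⟩
  case efficient =>
    rw [sum_sub_equalShare, hv N hN, mul_div_cancel_left₀ c hcardN.ne']
  case rational =>
    rcases S.eq_empty_or_nonempty with rfl | hS_ne
    · simp [hv0]
    have hshare : #S * c / #N ≤ c := by
      rw [div_le_iff₀ hcardN, mul_comm c]
      exact mul_le_mul_of_nonneg_right (by exact_mod_cast card_le_card hS) hc
    rw [sum_sub_equalShare, hv S hS_ne]
    linarith

end CoalitionalGame

theorem stmt2_general (n : ℕ) (hn : 1 ≤ n) (U : ℕ → ℝ) (R₀ α β γ : ℝ)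
    (hR₀ : 0 < R₀) (hβ : 0 ≤ β) (hγ : 0 ≤ γ)
    (v : Finset ℕ → ℝ) (hv0 : v ∅ = 0)
    (hv : ∀ S : Finset ℕ, S.Nonempty →
      v S = ∑ i ∈ S, U i - α * S.card / R₀ - (β + γ) / R₀)
    (x : ℕ → ℝ)
    (hx : ∀ i, x i = U i - α / R₀ - (β + γ) / (n * R₀)) :
    ∑ i ∈ Finset.Icc 1 n, x i = v (Finset.Icc 1 n) ∧
      ∀ S ⊆ Finset.Icc 1 n, v S ≤ ∑ i ∈ S, x i := by
  have hx_share : x = fun i => (U i - α / R₀) - (β + γ) / R₀ / #(Icc 1 n) := by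
    funext i
    rw [hx, Nat.card_Icc, Nat.add_sub_cancel, div_div, mul_comm R₀]
  have hv_fixedCost (S : Finset ℕ) (hS : S.Nonempty) :
      v S = ∑ i ∈ S, (U i - α / R₀) - (β + γ) / R₀ := by
    rw [hv S hS, sum_sub_distrib, sum_const, nsmul_eq_mul]
    ring
  rw [hx_share]
  exact CoalitionalGame.isInCore_equalShare ⟨1, by simp [hn]⟩ (by positivity) hv0 hv_fixedCost

/-- In the symmetric multicast game on `N = {1,…,n}`, the equal-cost-sharing payoff
profile `x i = U i - α/R₀ - (β+γ)/(n·R₀)` lies in the core. -/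
theorem stmt2 (n : ℕ) (hn : 1 ≤ n) (U : ℕ → ℝ) (R₀ α β γ : ℝ)
    (hR₀ : 0 < R₀) (hα : 0 < α) (hβ : 0 ≤ β) (hγ : 0 ≤ γ)
    (v : Finset ℕ → ℝ) (hv0 : v ∅ = 0)
    (hv : ∀ S : Finset ℕ, S.Nonempty →
      v S = ∑ i ∈ S, U i - α * S.card / R₀ - (β + γ) / R₀)
    (x : ℕ → ℝ)
    (hx : ∀ i, x i = U i - α / R₀ - (β + γ) / (n * R₀)) :
    ∑ i ∈ Finset.Icc 1 n, x i = v (Finset.Icc 1 n) ∧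
      ∀ S ⊆ Finset.Icc 1 n, v S ≤ ∑ i ∈ S, x i :=
  stmt2_general n hn U R₀ α β γ hR₀ hβ hγ v hv0 hv x hx
end

section
/- Let N be a finite set of n ≥ 2 players with valuations U_i ∈ ℝ, rates R_i > 0, and receive-cost parameters α_i > 0, and let β, γ ≥ 0. For nonempty S ⊆ N define R_S = min_{i∈S} R_i and v(S) = Σ_{i∈S} U_i − Σ_{i∈S} α_i/R_S − (β+γ)/R_S; set v(∅) = 0. Let R_min = min_i R_i, R_max = max_i R_i, α_min = min_i α_i, α_max = max_i α_i. If R_max/R_min ≤ (n/(n−1)) · (α_min(n−1) + β + γ)/(α_max·n + β + γ), then the core of the game is non-empty. -/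
/-!
Charge every user the receive cost at the slowest rate `R_min` and split the transmitter cost
`β + γ` equally: `x i = U i - α i / R_min - (β + γ) / (n R_min)`. This allocation is efficient
since `N` downloads at rate `R_min`. A proper coalition `S` of `t` users with receive costs summing
to `A` downloads at a rate `R_S ≤ R_max`, so it cannot object as soon as
`R_max / R_min ≤ n (A + c) / (n A + t c)` with `c = β + γ`, and the hypothesis on `R_max / R_min`
implies this bound for all `A ≤ t α_max` and `t ≤ n - 1`.
-/

open Finset

lemma core_of_forall_ssubset {ι : Type*} {N : Finset ι} {v : Finset ι → ℝ} (hv0 : v ∅ = 0)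
    {x : ι → ℝ} (hN : ∑ i ∈ N, x i = v N)
    (hS : ∀ S ⊂ N, S.Nonempty → v S ≤ ∑ i ∈ S, x i) :
    ∀ S ⊆ N, v S ≤ ∑ i ∈ S, x i := by
  intro S hSN
  rcases S.eq_empty_or_nonempty with rfl | hSne
  · simp [hv0]
  rcases hSN.eq_or_ssubset with rfl | hSN
  · exact hN.ge
  · exact hS S hSN hSne

section Threshold

variable {n t A amin amax c : ℝ}

lemma threshold_mul_le (ht1 : 1 ≤ t) (ht2 : t ≤ n - 1) (hle : amin ≤ amax) (hA0 : 0 ≤ A)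
    (hA : A ≤ t * amax) (hc : 0 ≤ c) :
    (amin * (n - 1) + c) * (n * A + t * c) ≤ (n - 1) * (amax * n + c) * (A + c) := by
  have hamax : 0 ≤ amax := by nlinarith
  have hnA : 0 ≤ n * A + t * c := by nlinarith
  -- the difference is `c (amax (n - 1) (n - t) - A) + c² (n - 1 - t)` after raising `amin` to `amax`
  have hgap : t ≤ (n - 1) * (n - t) := by nlinarith
  calc (amin * (n - 1) + c) * (n * A + t * c)
      ≤ (amax * (n - 1) + c) * (n * A + t * c) := by gcongr; linarith
    _ ≤ (n - 1) * (amax * n + c) * (A + c) := by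
      nlinarith [mul_nonneg hc (mul_nonneg hamax (sub_nonneg.2 hgap)), mul_nonneg hc hc]

lemma rate_ratio_mul_le {Rmin Rmax : ℝ} (hRmin : 0 < Rmin) (hamax : 0 < amax)
    (hcond : Rmax / Rmin ≤ (n / (n - 1)) * ((amin * (n - 1) + c) / (amax * n + c)))
    (ht1 : 1 ≤ t) (ht2 : t ≤ n - 1) (hle : amin ≤ amax) (hA0 : 0 ≤ A)
    (hA : A ≤ t * amax) (hc : 0 ≤ c) :
    Rmax * (n * A + t * c) ≤ n * Rmin * (A + c) := by
  have hd : 0 < (n - 1) * (amax * n + c) := by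
    apply mul_pos <;> nlinarith
  rw [div_mul_div_comm, div_le_div_iff₀ hRmin hd] at hcond
  have hnA : 0 ≤ n * A + t * c := by nlinarith
  have hpoly := threshold_mul_le ht1 ht2 hle hA0 hA hc
  refine le_of_mul_le_mul_right ?_ hd
  calc Rmax * (n * A + t * c) * ((n - 1) * (amax * n + c))
      = Rmax * ((n - 1) * (amax * n + c)) * (n * A + t * c) := by ring
    _ ≤ n * (amin * (n - 1) + c) * Rmin * (n * A + t * c) := by gcongr
    _ = n * Rmin * ((amin * (n - 1) + c) * (n * A + t * c)) := by ring
    _ ≤ n * Rmin * ((n - 1) * (amax * n + c) * (A + c)) := by gcongr; nlinarith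
    _ = n * Rmin * (A + c) * ((n - 1) * (amax * n + c)) := by ring

lemma share_le_cost {Rmin Rmax RS : ℝ} (hRS : 0 < RS) (hRSmax : RS ≤ Rmax) (hRmin : 0 < Rmin)
    (hamax : 0 < amax)
    (hcond : Rmax / Rmin ≤ (n / (n - 1)) * ((amin * (n - 1) + c) / (amax * n + c)))
    (ht1 : 1 ≤ t) (ht2 : t ≤ n - 1) (hle : amin ≤ amax) (hA0 : 0 ≤ A)
    (hA : A ≤ t * amax) (hc : 0 ≤ c) :
    A / Rmin + t * (c / (n * Rmin)) ≤ A / RS + c / RS := by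
  have hn : 0 < n := by linarith
  have hRmax : 0 < Rmax := hRS.trans_le hRSmax
  have key := rate_ratio_mul_le hRmin hamax hcond ht1 ht2 hle hA0 hA hc
  calc A / Rmin + t * (c / (n * Rmin)) = (n * A + t * c) / (n * Rmin) := by field_simp
    _ ≤ (A + c) / Rmax := by rw [div_le_div_iff₀ (by positivity) hRmax]; linarith
    _ ≤ (A + c) / RS := by gcongr
    _ = A / RS + c / RS := add_div _ _ _

end Threshold

theorem stmt3_general {ι : Type*} [DecidableEq ι] (N : Finset ι) (hNne : N.Nonempty)
    (n : ℕ) (hcard : N.card = n)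
    (U R αp : ι → ℝ) (β γ : ℝ)
    (hR : ∀ i ∈ N, 0 < R i) (hαp : ∀ i ∈ N, 0 < αp i)
    (hβ : 0 ≤ β) (hγ : 0 ≤ γ)
    (v : Finset ι → ℝ) (hv0 : v ∅ = 0)
    (hv : ∀ (S : Finset ι) (h : S.Nonempty),
      v S = ∑ i ∈ S, U i - (∑ i ∈ S, αp i) / S.inf' h R - (β + γ) / S.inf' h R)
    (Rmin Rmax αmin αmax : ℝ)
    (hRmin : Rmin = N.inf' hNne R) (hRmax : Rmax = N.sup' hNne R)
    (hαmin : αmin = N.inf' hNne αp) (hαmax : αmax = N.sup' hNne αp)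
    (hcond : Rmax / Rmin ≤
      ((n : ℝ) / ((n : ℝ) - 1)) * ((αmin * ((n : ℝ) - 1) + β + γ) / (αmax * n + β + γ))) :
    ∃ x : ι → ℝ, ∑ i ∈ N, x i = v N ∧ ∀ S ⊆ N, v S ≤ ∑ i ∈ S, x i := by
  obtain ⟨i₀, hi₀⟩ := hNne
  have hRmin0 : 0 < Rmin := hRmin ▸ (lt_inf'_iff _).2 hR
  have hαmax0 : 0 < αmax := (hαp i₀ hi₀).trans_le (hαmax ▸ le_sup' αp hi₀)
  have hαle : αmin ≤ αmax := hαmin ▸ hαmax ▸ (inf'_le αp hi₀).trans (le_sup' αp hi₀)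
  rw [add_assoc, add_assoc] at hcond
  set x : ι → ℝ := fun i => U i - αp i / Rmin - (β + γ) / (n * Rmin)
  have hsum (T : Finset ι) : ∑ i ∈ T, x i =
      ∑ i ∈ T, U i - (∑ i ∈ T, αp i) / Rmin - #T * ((β + γ) / (n * Rmin)) := by
    simp only [x, sum_sub_distrib, sum_const, nsmul_eq_mul, sum_div]
  have hxN : ∑ i ∈ N, x i = v N := by
    have hn0 : (n : ℝ) ≠ 0 := by rw [← hcard]; exact_mod_cast (card_pos.2 ⟨i₀, hi₀⟩).ne'
    rw [hsum, hv N ⟨i₀, hi₀⟩, ← hRmin, hcard]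
    field_simp
  refine ⟨x, hxN, core_of_forall_ssubset hv0 hxN fun S hSN hS => ?_⟩
  have hRS : 0 < S.inf' hS R := (lt_inf'_iff _).2 fun i hi => hR i (hSN.subset hi)
  have hRSmax : S.inf' hS R ≤ Rmax := by
    have ⟨j, hj⟩ := hS
    exact hRmax ▸ (inf'_le R hj).trans (le_sup' R (hSN.subset hj))
  have ht1 : (1 : ℝ) ≤ #S := by exact_mod_cast hS.card_pos
  have ht2 : (#S : ℝ) ≤ n - 1 := by
    have := hcard ▸ card_lt_card hSN
    rw [le_sub_iff_add_le]; exact_mod_cast this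
  have hA0 : 0 ≤ ∑ i ∈ S, αp i := sum_nonneg fun i hi => (hαp i (hSN.subset hi)).le
  have hA : ∑ i ∈ S, αp i ≤ #S * αmax := by
    simpa using sum_le_card_nsmul S αp αmax fun i hi => hαmax ▸ le_sup' αp (hSN.subset hi)
  have := share_le_cost hRS hRSmax hRmin0 hαmax0 hcond ht1 ht2 hαle hA0 hA (add_nonneg hβ hγ)
  rw [hv S hS, hsum]
  linarith

/-- In the multicast game with heterogeneous rates `R i` and receive-costs `αp i`,
if `Rmax/Rmin ≤ (n/(n-1))·((αmin(n-1)+β+γ)/(αmax·n+β+γ))` then the core is non-empty. -/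
theorem stmt3 {ι : Type*} [DecidableEq ι] (N : Finset ι) (hNne : N.Nonempty)
    (n : ℕ) (hn : 2 ≤ n) (hcard : N.card = n)
    (U R αp : ι → ℝ) (β γ : ℝ)
    (hR : ∀ i ∈ N, 0 < R i) (hαp : ∀ i ∈ N, 0 < αp i)
    (hβ : 0 ≤ β) (hγ : 0 ≤ γ)
    (v : Finset ι → ℝ) (hv0 : v ∅ = 0)
    (hv : ∀ (S : Finset ι) (h : S.Nonempty),
      v S = ∑ i ∈ S, U i - (∑ i ∈ S, αp i) / S.inf' h R - (β + γ) / S.inf' h R)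
    (Rmin Rmax αmin αmax : ℝ)
    (hRmin : Rmin = N.inf' hNne R) (hRmax : Rmax = N.sup' hNne R)
    (hαmin : αmin = N.inf' hNne αp) (hαmax : αmax = N.sup' hNne αp)
    (hcond : Rmax / Rmin ≤
      ((n : ℝ) / ((n : ℝ) - 1)) * ((αmin * ((n : ℝ) - 1) + β + γ) / (αmax * n + β + γ))) :
    ∃ x : ι → ℝ, ∑ i ∈ N, x i = v N ∧ ∀ S ⊆ N, v S ≤ ∑ i ∈ S, x i :=
  stmt3_general N hNne n hcard U R αp β γ hR hαp hβ hγ v hv0 hv Rmin Rmax αmin αmax hRmin hRmax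
    hαmin hαmax hcond
end

section
/- Let N be a finite set of n ≥ 2 players with valuations U_i ∈ ℝ, rates R_i > 0, common receive-cost α > 0, and parameters β, γ ≥ 0. For nonempty S ⊆ N define v(S) = Σ_{i∈S} U_i − α|S|/R_S − (β+γ)/R_S where R_S = min_{i∈S} R_i. Let k be a user attaining the minimum rate R_k = min_{i∈N} R_i, let N' = N \ {k}, and suppose min_{i∈N'} R_i = λ·R_k with λ ≥ 1. If λ > 1 + (β+γ)/(α(n−1)), then v(N') + v({k}) > v(N), and consequently the core of the game is empty. -/
/-!
Splitting off the slowest user `k` gains `α |N'| (1/R_k - 1/(λ R_k)) - (β+γ)/(λ R_k)`: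
every other user now receives at the faster rate `λ R_k`, at the price of a second
transmission at that rate. The hypothesis on `λ` is exactly positivity of this gain, and a
superadditive split rules out any core allocation, since the two coalitions together would
demand more than `v(N)`.
-/

open Finset

theorem not_exists_core_of_lt_sdiff_add {ι : Type*} [DecidableEq ι] {N S : Finset ι}
    {v : Finset ι → ℝ} (hS : S ⊆ N) (hsplit : v N < v (N \ S) + v S) :
    ¬∃ x : ι → ℝ, ∑ i ∈ N, x i = v N ∧ ∀ T ⊆ N, v T ≤ ∑ i ∈ T, x i := by
  rintro ⟨x, hxN, hcore⟩
  linarith [sum_sdiff hS (f := x), hcore (N \ S) sdiff_subset, hcore S hS]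

theorem multicast_split_gain (α c s u r lam m : ℝ) (hr : r ≠ 0) (hlam : lam ≠ 0) :
    (s - α * m / (lam * r) - c / (lam * r)) + (u - α * 1 / r - c / r)
      - (s + u - α * (m + 1) / r - c / r) = (α * m * (lam - 1) - c) / (lam * r) := by
  field_simp
  ring

theorem value_lt_value_erase_add_value_singleton {ι : Type*} [DecidableEq ι] {N : Finset ι}
    {U R : ι → ℝ} {α c lam : ℝ} {v : Finset ι → ℝ}
    (hv : ∀ (S : Finset ι) (h : S.Nonempty),
      v S = ∑ i ∈ S, U i - α * S.card / S.inf' h R - c / S.inf' h R)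
    {k : ι} (hk : k ∈ N) (hkmin : ∀ i ∈ N, R k ≤ R i) (hN' : (N.erase k).Nonempty)
    (hlam : (N.erase k).inf' hN' R = lam * R k) (hpos : 0 < lam * R k)
    (hgain : c < α * (N.erase k).card * (lam - 1)) :
    v N < v (N.erase k) + v {k} := by
  have hNk : N.inf' ⟨k, hk⟩ R = R k := le_antisymm (inf'_le _ hk) (le_inf' _ _ hkmin)
  have hU : ∑ i ∈ N, U i = ∑ i ∈ N.erase k, U i + U k := (sum_erase_add N U hk).symm
  have hcard : (N.card : ℝ) = (N.erase k).card + 1 := by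
    rw [← card_erase_add_one hk]; push_cast; rfl
  rw [← sub_pos, hv N ⟨k, hk⟩, hv _ hN', hv {k} (singleton_nonempty k), hNk, hlam, hU, hcard,
    inf'_singleton, sum_singleton, card_singleton, Nat.cast_one,
    multicast_split_gain _ _ _ _ _ _ _ (right_ne_zero_of_mul hpos.ne')
      (left_ne_zero_of_mul hpos.ne')]
  exact div_pos (sub_pos.2 hgain) hpos

theorem stmt4_general {ι : Type*} [DecidableEq ι] (N : Finset ι)
    (n : ℕ) (hcard : N.card = n)
    (U R : ι → ℝ) (α β γ lam : ℝ)
    (hR : ∀ i ∈ N, 0 < R i) (hα : 0 < α)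
    (v : Finset ι → ℝ)
    (hv : ∀ (S : Finset ι) (h : S.Nonempty),
      v S = ∑ i ∈ S, U i - α * S.card / S.inf' h R - (β + γ) / S.inf' h R)
    (k : ι) (hk : k ∈ N) (hkmin : ∀ i ∈ N, R k ≤ R i)
    (hN' : (N.erase k).Nonempty)
    (hlam : (N.erase k).inf' hN' R = lam * R k)
    (hcond : lam > 1 + (β + γ) / (α * ((n : ℝ) - 1))) :
    v (N.erase k) + v {k} > v N ∧
      ¬∃ x : ι → ℝ, ∑ i ∈ N, x i = v N ∧ ∀ S ⊆ N, v S ≤ ∑ i ∈ S, x i := by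
  have hm : ((N.erase k).card : ℝ) = n - 1 := by
    rw [← hcard, ← card_erase_add_one hk]; push_cast; ring
  have hm_pos : 0 < α * ((n : ℝ) - 1) := mul_pos hα (hm ▸ by exact_mod_cast hN'.card_pos)
  have hpos : 0 < lam * R k := hlam ▸ (lt_inf'_iff _).2 fun i hi => hR i (mem_of_mem_erase hi)
  have hgain : β + γ < α * (N.erase k).card * (lam - 1) := by
    rw [hm, ← div_lt_iff₀' hm_pos]; linarith
  have hsplit := value_lt_value_erase_add_value_singleton hv hk hkmin hN' hlam hpos hgain
  refine ⟨hsplit, not_exists_core_of_lt_sdiff_add (singleton_subset_iff.2 hk) ?_⟩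
  rwa [sdiff_singleton_eq_erase]

/-- If the ratio `λ` between the second-minimum and minimum data rate exceeds
`1 + (β+γ)/(α(n-1))`, then `v(N \ {k}) + v({k}) > v(N)` and the core is empty. -/
theorem stmt4 {ι : Type*} [DecidableEq ι] (N : Finset ι)
    (n : ℕ) (hn : 2 ≤ n) (hcard : N.card = n)
    (U R : ι → ℝ) (α β γ lam : ℝ)
    (hR : ∀ i ∈ N, 0 < R i) (hα : 0 < α) (hβ : 0 ≤ β) (hγ : 0 ≤ γ)
    (v : Finset ι → ℝ) (hv0 : v ∅ = 0)
    (hv : ∀ (S : Finset ι) (h : S.Nonempty),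
      v S = ∑ i ∈ S, U i - α * S.card / S.inf' h R - (β + γ) / S.inf' h R)
    (k : ι) (hk : k ∈ N) (hkmin : ∀ i ∈ N, R k ≤ R i)
    (hN' : (N.erase k).Nonempty)
    (hlam1 : 1 ≤ lam)
    (hlam : (N.erase k).inf' hN' R = lam * R k)
    (hcond : lam > 1 + (β + γ) / (α * ((n : ℝ) - 1))) :
    v (N.erase k) + v {k} > v N ∧
      ¬∃ x : ι → ℝ, ∑ i ∈ N, x i = v N ∧ ∀ S ⊆ N, v S ≤ ∑ i ∈ S, x i :=
  stmt4_general N n hcard U R α β γ lam hR hα v hv k hk hkmin hN' hlam hcond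
end

section
/- Let N be a finite set of n ≥ 2 players with valuations U_i ∈ ℝ, rates R_i > 0, common receive-cost α > 0, and β, γ ≥ 0. Define v(S) = Σ_{i∈S} U_i − α|S|/R_S − (β+γ)/R_S for nonempty S ⊆ N, where R_S = min_{i∈S} R_i. Let k attain the minimum rate R_k = min_{i∈N} R_i and let m attain the maximum rate R_m = max_{i∈N} R_i with R_m = μ·R_k, μ ≥ 1, and suppose k ≠ m. If μ > 1 + (β+γ)/α, then v(N \ {m}) + v({m}) > v(N), and hence the core of the game is empty. -/
/-!
Splitting off the fastest user `m` is profitable: the remaining coalition still receives at the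
minimum rate `R k`, so it pays the same transmission and bandwidth cost `(β + γ) / R k` as the grand
coalition and one receive cost `α / R k` less, while `m` alone pays `(α + β + γ) / R m`. The gain
`α / R k - (α + β + γ) / R m = (α μ - α - β - γ) / R m` is positive exactly when
`μ > 1 + (β + γ) / α`, and a profitable two-block partition rules out every core allocation.
-/

open Finset

theorem Finset.inf'_eq_of_forall_le {ι α : Type*} [LinearOrder α] {s : Finset ι} (hs : s.Nonempty)
    {f : ι → α} {k : ι} (hk : k ∈ s) (hmin : ∀ i ∈ s, f k ≤ f i) : s.inf' hs f = f k :=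
  le_antisymm (inf'_le f hk) (le_inf' hs f hmin)

theorem not_exists_core_of_split_gt {ι : Type*} [DecidableEq ι] {N S : Finset ι}
    {v : Finset ι → ℝ} (hS : S ⊆ N) (hsplit : v N < v S + v (N \ S)) :
    ¬∃ x : ι → ℝ, ∑ i ∈ N, x i = v N ∧ ∀ T ⊆ N, v T ≤ ∑ i ∈ T, x i := by
  rintro ⟨x, hsum, hcore⟩
  have hpart : ∑ i ∈ N \ S, x i + ∑ i ∈ S, x i = ∑ i ∈ N, x i := sum_sdiff hS
  linarith [hcore S hS, hcore (N \ S) sdiff_subset]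

section SplitGain

variable {ι : Type*} [DecidableEq ι] {N : Finset ι} {U R : ι → ℝ} {α β γ : ℝ}
  {v : Finset ι → ℝ}

theorem value_erase_add_value_singleton_sub_value
    (hv : ∀ (S : Finset ι) (h : S.Nonempty),
      v S = ∑ i ∈ S, U i - α * S.card / S.inf' h R - (β + γ) / S.inf' h R)
    {k m : ι} (hk : k ∈ N) (hm : m ∈ N) (hkm : k ≠ m) (hkmin : ∀ i ∈ N, R k ≤ R i)
    (hRk : 0 < R k) (hRm : 0 < R m) :
    v (N.erase m) + v {m} - v N = α / R k - (α + (β + γ)) / R m := by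
  have hkE : k ∈ N.erase m := mem_erase.mpr ⟨hkm, hk⟩
  have hinfN : N.inf' ⟨k, hk⟩ R = R k := inf'_eq_of_forall_le _ hk hkmin
  have hinfE : (N.erase m).inf' ⟨k, hkE⟩ R = R k :=
    inf'_eq_of_forall_le _ hkE fun i hi => hkmin i (mem_of_mem_erase hi)
  rw [hv N ⟨k, hk⟩, hv (N.erase m) ⟨k, hkE⟩, hv {m} (singleton_nonempty m), hinfN, hinfE,
    inf'_singleton, sum_singleton, card_singleton, cast_card_erase_of_mem hm,
    ← sum_erase_add N U hm]
  field_simp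
  ring

end SplitGain

theorem stmt5_general {ι : Type*} [DecidableEq ι] (N : Finset ι)
    (U R : ι → ℝ) (α β γ μ : ℝ)
    (hR : ∀ i ∈ N, 0 < R i) (hα : 0 < α)
    (v : Finset ι → ℝ)
    (hv : ∀ (S : Finset ι) (h : S.Nonempty),
      v S = ∑ i ∈ S, U i - α * S.card / S.inf' h R - (β + γ) / S.inf' h R)
    (k m : ι) (hk : k ∈ N) (hm : m ∈ N) (hkm : k ≠ m)
    (hkmin : ∀ i ∈ N, R k ≤ R i)
    (hμ : R m = μ * R k)
    (hcond : μ > 1 + (β + γ) / α) :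
    v (N.erase m) + v {m} > v N ∧
      ¬∃ x : ι → ℝ, ∑ i ∈ N, x i = v N ∧ ∀ S ⊆ N, v S ≤ ∑ i ∈ S, x i := by
  have hRk := hR k hk
  have hRm := hR m hm
  have hgain := value_erase_add_value_singleton_sub_value hv hk hm hkm hkmin hRk hRm
  have hcost : α + (β + γ) < α * μ := by
    have := (div_lt_iff₀ hα).mp (show (β + γ) / α < μ - 1 by linarith)
    linarith
  have hgain_pos : 0 < α / R k - (α + (β + γ)) / R m := by
    rw [sub_pos, div_lt_div_iff₀ hRm hRk, hμ]
    nlinarith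
  have hsplit : v N < v {m} + v (N \ {m}) := by
    rw [sdiff_singleton_eq_erase]
    linarith
  exact ⟨by linarith, not_exists_core_of_split_gt (singleton_subset_iff.mpr hm) hsplit⟩

/-- If the ratio `μ` between the maximum and minimum data rate exceeds
`1 + (β+γ)/α`, then `v(N \ {m}) + v({m}) > v(N)` and the core is empty. -/
theorem stmt5 {ι : Type*} [DecidableEq ι] (N : Finset ι)
    (n : ℕ) (hn : 2 ≤ n) (hcard : N.card = n)
    (U R : ι → ℝ) (α β γ μ : ℝ)
    (hR : ∀ i ∈ N, 0 < R i) (hα : 0 < α) (hβ : 0 ≤ β) (hγ : 0 ≤ γ)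
    (v : Finset ι → ℝ) (hv0 : v ∅ = 0)
    (hv : ∀ (S : Finset ι) (h : S.Nonempty),
      v S = ∑ i ∈ S, U i - α * S.card / S.inf' h R - (β + γ) / S.inf' h R)
    (k m : ι) (hk : k ∈ N) (hm : m ∈ N) (hkm : k ≠ m)
    (hkmin : ∀ i ∈ N, R k ≤ R i) (hmmax : ∀ i ∈ N, R i ≤ R m)
    (hμ1 : 1 ≤ μ) (hμ : R m = μ * R k)
    (hcond : μ > 1 + (β + γ) / α) :
    v (N.erase m) + v {m} > v N ∧
      ¬∃ x : ι → ℝ, ∑ i ∈ N, x i = v N ∧ ∀ S ⊆ N, v S ≤ ∑ i ∈ S, x i :=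
  stmt5_general N U R α β γ μ hR hα v hv k m hk hm hkm hkmin hμ hcond
end

section
/- Let N = {1,…,n} with rates R_i > 0, receive-cost parameters α_i > 0, valuations U_i ∈ ℝ, and β, γ ≥ 0. Define v(S) = Σ_{i∈S} U_i − Σ_{i∈S} α_i/R_S − (β+γ)/R_S for nonempty S, where R_S = min_{i∈S} R_i, and v(∅) = 0. Suppose R_{i+1}/R_i ≥ (α_{i+1} + β + γ)/α_{i+1} for all i ∈ {1,…,n−1}. Then for every nonempty coalition S ⊆ N, Σ_{i∈N} v(S ∩ {i}) ≥ v(S); i.e., the partition of N into singletons is D_c-stable. -/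
/-!
The ratio condition makes the rates increasing, so `R_S` is the rate of the smallest user `m`
of `S`. The user `m` alone pays `(α_m + β + γ) / R_m` in the singleton partition, exactly its
share in `S` together with the fixed cost. Every other user `i > m` pays
`(α_i + β + γ) / R_i ≤ α_i / R_{i-1} ≤ α_i / R_m` alone, which is its share of the receive
cost in `S`; so splitting `S` into singletons never lowers the total value.
-/

open Finset

theorem Finset.sum_inter_singleton_eq_sum {α M : Type*} [DecidableEq α] [AddCommMonoid M]
    {v : Finset α → M} (hv : v ∅ = 0) {S T : Finset α} (hST : S ⊆ T) :
    ∑ i ∈ T, v (S ∩ {i}) = ∑ i ∈ S, v {i} := by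
  rw [← sum_subset hST fun i _ hi ↦ by rw [inter_singleton_of_notMem hi, hv]]
  exact sum_congr rfl fun i hi ↦ by rw [inter_singleton_of_mem hi]

theorem MonotoneOn.inf'_eq_apply_min' {α β : Type*} [LinearOrder α] [LinearOrder β]
    {f : α → β} {s : Set α} (hf : MonotoneOn f s) {S : Finset α} (hS : ↑S ⊆ s)
    (hne : S.Nonempty) : S.inf' hne f = f (S.min' hne) :=
  le_antisymm (inf'_le f (min'_mem S hne)) <| le_inf' hne f fun i hi ↦
    hf (hS (min'_mem S hne)) (hS hi) (min'_le S i hi)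

theorem Finset.sum_add_div_le_add_div {ι K : Type*} [Field K] [LinearOrder K]
    [IsOrderedAddMonoid K] {S : Finset ι} {m : ι} (hm : m ∈ S) (a R : ι → K) (c : K)
    (h : ∀ i ∈ S, i ≠ m → (a i + c) / R i ≤ a i / R m) :
    ∑ i ∈ S, (a i + c) / R i ≤ (∑ i ∈ S, a i + c) / R m := by
  classical
  have hrest : ∑ i ∈ S.erase m, (a i + c) / R i ≤ ∑ i ∈ S.erase m, a i / R m :=
    sum_le_sum fun i hi ↦ h i (mem_of_mem_erase hi) (ne_of_mem_erase hi)
  calc ∑ i ∈ S, (a i + c) / R i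
      = (a m + c) / R m + ∑ i ∈ S.erase m, (a i + c) / R i := (add_sum_erase S _ hm).symm
    _ ≤ (a m + c) / R m + ∑ i ∈ S.erase m, a i / R m := add_le_add_right hrest _
    _ = (∑ i ∈ S, a i + c) / R m := by
      rw [← add_sum_erase S _ hm, ← sum_div, add_div, add_div, add_div]
      ring

theorem le_of_add_div_self_le_div {a c x y : ℝ} (ha : 0 < a) (hc : 0 ≤ c) (hx : 0 < x)
    (h : (a + c) / a ≤ y / x) : x ≤ y := by
  have : 1 ≤ y / x := le_trans ((one_le_div ha).mpr (by linarith)) h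
  rwa [one_le_div hx] at this

theorem add_div_le_div_of_add_div_self_le_div {a c x y : ℝ} (ha : 0 < a) (hx : 0 < x)
    (hy : 0 < y) (h : (a + c) / a ≤ y / x) : (a + c) / y ≤ a / x := by
  rw [div_le_div_iff₀ ha hx] at h
  rw [div_le_div_iff₀ hy hx]
  linarith

section RatioCondition

variable {n : ℕ} {R αp : ℕ → ℝ} {c : ℝ} (hR : ∀ i, 0 < R i) (hαp : ∀ i, 0 < αp i)
  (hratio : ∀ i, 1 ≤ i → i + 1 ≤ n → (αp (i + 1) + c) / αp (i + 1) ≤ R (i + 1) / R i)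
include hR hαp hratio

theorem monotoneOn_Icc_of_ratio (hc : 0 ≤ c) : MonotoneOn R (Set.Icc 1 n) :=
  monotoneOn_of_le_add_one Set.ordConnected_Icc fun i _ hi hi' ↦
    le_of_add_div_self_le_div (hαp _) hc (hR i) (hratio i hi.1 hi'.2)

theorem add_div_le_div_of_lt (hc : 0 ≤ c) {m i : ℕ} (hm : m ∈ Set.Icc 1 n)
    (hi : i ∈ Set.Icc 1 n) (hmi : m < i) : (αp i + c) / R i ≤ αp i / R m := by
  obtain ⟨j, rfl⟩ : ∃ j, i = j + 1 := ⟨i - 1, by omega⟩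
  have hRmj : R m ≤ R j :=
    monotoneOn_Icc_of_ratio hR hαp hratio hc hm ⟨by grind, by grind⟩ (by omega)
  calc (αp (j + 1) + c) / R (j + 1)
      ≤ αp (j + 1) / R j :=
        add_div_le_div_of_add_div_self_le_div (hαp _) (hR j) (hR _)
          (hratio j (by grind) hi.2)
    _ ≤ αp (j + 1) / R m := div_le_div_of_nonneg_left (hαp _).le (hR m) hRmj

end RatioCondition

/-- If `R (i+1) / R i ≥ (α (i+1) + β + γ)/α (i+1)` for all consecutive users,
then the singleton partition of `N = {1,…,n}` is `D_c`-stable: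
`∑_{i∈N} v (S ∩ {i}) ≥ v S` for every nonempty coalition `S ⊆ N`. -/
theorem stmt6 (n : ℕ) (U R αp : ℕ → ℝ) (β γ : ℝ)
    (hR : ∀ i, 0 < R i) (hαp : ∀ i, 0 < αp i) (hβ : 0 ≤ β) (hγ : 0 ≤ γ)
    (v : Finset ℕ → ℝ) (hv0 : v ∅ = 0)
    (hv : ∀ (S : Finset ℕ) (h : S.Nonempty),
      v S = ∑ i ∈ S, U i - (∑ i ∈ S, αp i) / S.inf' h R - (β + γ) / S.inf' h R)
    (hratio : ∀ i, 1 ≤ i → i + 1 ≤ n →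
      R (i + 1) / R i ≥ (αp (i + 1) + β + γ) / αp (i + 1)) :
    ∀ S ⊆ Finset.Icc 1 n, S.Nonempty →
      ∑ i ∈ Finset.Icc 1 n, v (S ∩ {i}) ≥ v S := by
  intro S hS hne
  have hc : 0 ≤ β + γ := add_nonneg hβ hγ
  have hratio' : ∀ i, 1 ≤ i → i + 1 ≤ n →
      (αp (i + 1) + (β + γ)) / αp (i + 1) ≤ R (i + 1) / R i := by
    simpa only [add_assoc, ge_iff_le] using hratio
  have hSIcc : ↑S ⊆ Set.Icc 1 n := by simpa [← coe_Icc] using hS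
  have hsingleton : ∀ i, v {i} = U i - (αp i + (β + γ)) / R i := fun i ↦ by
    rw [hv {i} (singleton_nonempty i), sum_singleton, sum_singleton, inf'_singleton]
    ring
  have hcost := sum_add_div_le_add_div (min'_mem S hne) αp R (β + γ) fun i hi hne' ↦
    add_div_le_div_of_lt hR hαp hratio' hc (hSIcc (min'_mem S hne)) (hSIcc hi)
      (lt_of_le_of_ne (min'_le S i hi) (Ne.symm hne'))
  rw [sum_inter_singleton_eq_sum hv0 hS, hv S hne,
    (monotoneOn_Icc_of_ratio hR hαp hratio' hc).inf'_eq_apply_min' hSIcc hne,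
    sum_congr rfl fun i _ ↦ hsingleton i, sum_sub_distrib]
  rw [add_div] at hcost
  linarith
end

section
/- Let S₁, S₂, …, S_k (k ≥ 2) be pairwise disjoint nonempty subsets of a part P_j of a partition, with player parameters U_i ∈ ℝ, rates R_i ∈ [R_min, R_max] with 0 < R_min ≤ R_max, receive-costs α_i ∈ [α_lo, α_hi] with 0 < α_lo ≤ α_hi, and β, γ ≥ 0. Define v(S) = Σ_{i∈S} U_i − Σ_{i∈S} α_i/R_S − (β+γ)/R_S with R_S = min_{i∈S} R_i. Let m = |S₁|+⋯+|S_k|. If R_max/R_min ≤ (α_lo·m + k(β+γ))/(α_hi·m + β + γ), then v(S₁ ∪ ⋯ ∪ S_k) ≥ Σ_{i=1}^k v(S_i). -/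
/-!
The cost of a coalition `T` is `(∑_{i ∈ T} α_i + β + γ) / R_T`, and `v T` is the total valuation
minus this cost; the valuations add up over a disjoint union, so only the costs have to be compared.
The merged coalition costs at most `(α_hi m + β + γ) / R_min`, while each part `S_j` costs at least
`(α_lo |S_j| + β + γ) / R_max`, so the parts together cost at least `(α_lo m + k(β + γ)) / R_max`.
The hypothesis on `R_max / R_min` says precisely that the first bound is below the second.
-/

open Finset

section Cost

variable {ι : Type*}

theorem Finset.inf'_mem_Icc {α : Type*} [Lattice α] {W : Finset ι} (hW : W.Nonempty)
    {f : ι → α} {a b : α} (hf : ∀ x ∈ W, f x ∈ Set.Icc a b) : W.inf' hW f ∈ Set.Icc a b := by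
  obtain ⟨x, hx⟩ := hW
  exact ⟨le_inf' _ _ fun y hy => (hf y hy).1, inf'_le_of_le f hx (hf x hx).2⟩

noncomputable def coalitionCost (α R : ι → ℝ) (B : ℝ) (T : Finset ι) (hT : T.Nonempty) : ℝ :=
  (∑ i ∈ T, α i + B) / T.inf' hT R

theorem coalitionCost_le {α R : ι → ℝ} {B Rmin αhi : ℝ} {T : Finset ι} (hT : T.Nonempty)
    (hRmin : 0 < Rmin) (hR : ∀ x ∈ T, Rmin ≤ R x) (hα : ∀ x ∈ T, α x ≤ αhi)
    (hbound : 0 ≤ αhi * #T + B) :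
    coalitionCost α R B T hT ≤ (αhi * #T + B) / Rmin := by
  have hsum : ∑ i ∈ T, α i ≤ αhi * #T := by
    simpa [mul_comm] using sum_le_card_nsmul T α αhi hα
  exact div_le_div₀ hbound (by linarith) hRmin (le_inf' _ _ hR)

theorem le_coalitionCost {α R : ι → ℝ} {B Rmin Rmax αlo : ℝ} {T : Finset ι} (hT : T.Nonempty)
    (hRmin : 0 < Rmin) (hR : ∀ x ∈ T, R x ∈ Set.Icc Rmin Rmax) (hα : ∀ x ∈ T, αlo ≤ α x)
    (hbound : 0 ≤ αlo * #T + B) :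
    (αlo * #T + B) / Rmax ≤ coalitionCost α R B T hT := by
  have hsum : αlo * #T ≤ ∑ i ∈ T, α i := by
    simpa [mul_comm] using card_nsmul_le_sum T α αlo hα
  have hRT := inf'_mem_Icc hT hR
  exact div_le_div₀ (by linarith) (by linarith) (hRmin.trans_le hRT.1) hRT.2

theorem sum_le_sum_coalitionCost {κ : Type*} {α R : ι → ℝ} {B Rmin Rmax αlo : ℝ}
    {s : Finset κ} {S : κ → Finset ι} (hS : ∀ j, (S j).Nonempty) (hRmin : 0 < Rmin)
    (hR : ∀ j ∈ s, ∀ x ∈ S j, R x ∈ Set.Icc Rmin Rmax) (hα : ∀ j ∈ s, ∀ x ∈ S j, αlo ≤ α x)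
    (hαlo : 0 ≤ αlo) (hB : 0 ≤ B) :
    (αlo * ∑ j ∈ s, (#(S j) : ℝ) + #s * B) / Rmax ≤ ∑ j ∈ s, coalitionCost α R B (S j) (hS j) := by
  calc (αlo * ∑ j ∈ s, (#(S j) : ℝ) + #s * B) / Rmax
      = ∑ j ∈ s, (αlo * #(S j) + B) / Rmax := by
        rw [← sum_div, sum_add_distrib, ← mul_sum, sum_const, nsmul_eq_mul]
    _ ≤ _ := sum_le_sum fun j hj =>
        le_coalitionCost (hS j) hRmin (hR j hj) (hα j hj) (by positivity)

end Cost

theorem div_le_div_swap_of_div_le_div {a b c d : ℝ} (ha : 0 < a) (hb : 0 < b) (hd : 0 < d)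
    (h : b / a ≤ c / d) : d / a ≤ c / b := by
  rw [div_le_div_iff₀ ha hd] at h
  rw [div_le_div_iff₀ ha hb]
  linarith

theorem stmt7_general {ι : Type*} [DecidableEq ι] (k : ℕ) (hk : 2 ≤ k)
    (Pj : Finset ι) (S : Fin k → Finset ι)
    (hSne : ∀ i, (S i).Nonempty) (hSsub : ∀ i, S i ⊆ Pj)
    (hdisj : ∀ i j, i ≠ j → Disjoint (S i) (S j))
    (U R αp : ι → ℝ) (Rmin Rmax αlo αhi β γ : ℝ)
    (hRmin : 0 < Rmin) (hRR : Rmin ≤ Rmax)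
    (hRrange : ∀ x ∈ Pj, R x ∈ Set.Icc Rmin Rmax)
    (hαlo : 0 < αlo) (hαα : αlo ≤ αhi)
    (hαrange : ∀ x ∈ Pj, αp x ∈ Set.Icc αlo αhi)
    (hβ : 0 ≤ β) (hγ : 0 ≤ γ)
    (v : Finset ι → ℝ)
    (hv : ∀ (T : Finset ι) (h : T.Nonempty),
      v T = ∑ i ∈ T, U i - (∑ i ∈ T, αp i) / T.inf' h R - (β + γ) / T.inf' h R)
    (m : ℕ) (hm : (m : ℝ) = ∑ i : Fin k, ((S i).card : ℝ))
    (hcond : Rmax / Rmin ≤ (αlo * m + k * (β + γ)) / (αhi * m + β + γ)) :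
    v (Finset.univ.biUnion S) ≥ ∑ i : Fin k, v (S i) := by
  have hvCost : ∀ T (h : T.Nonempty), v T = ∑ i ∈ T, U i - coalitionCost αp R (β + γ) T h := by
    intro T h
    rw [hv T h, coalitionCost, add_div]
    ring
  have hpd : ((univ : Finset (Fin k)) : Set (Fin k)).PairwiseDisjoint S :=
    fun i _ j _ h => hdisj i j h
  have hsub : univ.biUnion S ⊆ Pj := biUnion_subset.2 fun i _ => hSsub i
  have hne : (univ.biUnion S).Nonempty := biUnion_nonempty.2 ⟨⟨0, by omega⟩, mem_univ _, hSne _⟩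
  have hcard : (#(univ.biUnion S) : ℝ) = m := by
    rw [card_biUnion hpd, hm]
    push_cast
    rfl
  have hmpos : (0 : ℝ) < m := hcard ▸ by exact_mod_cast hne.card_pos
  have hαhi : 0 < αhi := hαlo.trans_le hαα
  have hmerged : coalitionCost αp R (β + γ) _ hne ≤ (αhi * m + (β + γ)) / Rmin := by
    rw [← hcard]
    exact coalitionCost_le hne hRmin (fun x hx => (hRrange x (hsub hx)).1)
      (fun x hx => (hαrange x (hsub hx)).2) (by positivity)
  have hparts :
      (αlo * m + k * (β + γ)) / Rmax ≤ ∑ j, coalitionCost αp R (β + γ) (S j) (hSne j) := by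
    simpa [hm] using sum_le_sum_coalitionCost (s := univ) hSne hRmin
      (fun j _ x hx => hRrange x (hSsub j hx)) (fun j _ x hx => (hαrange x (hSsub j hx)).1)
      hαlo.le (add_nonneg hβ hγ)
  have hratio : (αhi * m + (β + γ)) / Rmin ≤ (αlo * m + k * (β + γ)) / Rmax :=
    div_le_div_swap_of_div_le_div hRmin (hRmin.trans_le hRR) (by positivity)
      (by rwa [← add_assoc])
  rw [hvCost _ hne, sum_biUnion hpd]
  simp only [hvCost _ (hSne _), sum_sub_distrib]
  linarith

/-- Merging pairwise disjoint sub-coalitions `S 1, …, S k` inside one part `Pj`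
is beneficial when `Rmax/Rmin ≤ (αlo·m + k(β+γ))/(αhi·m + β+γ)`,
where `m = |S₁| + ⋯ + |S_k|`. -/
theorem stmt7 {ι : Type*} [DecidableEq ι] (k : ℕ) (hk : 2 ≤ k)
    (Pj : Finset ι) (S : Fin k → Finset ι)
    (hSne : ∀ i, (S i).Nonempty) (hSsub : ∀ i, S i ⊆ Pj)
    (hdisj : ∀ i j, i ≠ j → Disjoint (S i) (S j))
    (U R αp : ι → ℝ) (Rmin Rmax αlo αhi β γ : ℝ)
    (hRmin : 0 < Rmin) (hRR : Rmin ≤ Rmax)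
    (hRrange : ∀ x ∈ Pj, R x ∈ Set.Icc Rmin Rmax)
    (hαlo : 0 < αlo) (hαα : αlo ≤ αhi)
    (hαrange : ∀ x ∈ Pj, αp x ∈ Set.Icc αlo αhi)
    (hβ : 0 ≤ β) (hγ : 0 ≤ γ)
    (v : Finset ι → ℝ) (hv0 : v ∅ = 0)
    (hv : ∀ (T : Finset ι) (h : T.Nonempty),
      v T = ∑ i ∈ T, U i - (∑ i ∈ T, αp i) / T.inf' h R - (β + γ) / T.inf' h R)
    (m : ℕ) (hm : (m : ℝ) = ∑ i : Fin k, ((S i).card : ℝ))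
    (hcond : Rmax / Rmin ≤ (αlo * m + k * (β + γ)) / (αhi * m + β + γ)) :
    v (Finset.univ.biUnion S) ≥ ∑ i : Fin k, v (S i) :=
  stmt7_general k hk Pj S hSne hSsub hdisj U R αp Rmin Rmax αlo αhi β γ hRmin hRR hRrange hαlo hαα
    hαrange hβ hγ v hv m hm hcond
end

section
/- Let N = {1,…,n}, n ≥ 2, with rates R_i > 0 satisfying R_{i+1}/R_i ≥ (α_{i+1} + β + γ)/α_{i+1} for all i < n, where α_i > 0 and β, γ ≥ 0, and valuations U_i ∈ ℝ. Define v(S) = Σ_{i∈S} U_i − Σ_{i∈S} α_i/R_S − (β+γ)/R_S for nonempty S with R_S = min_{i∈S} R_i. Then for any nonempty S ⊆ N with |S| ≥ 2 and minimum element i₁ = min S, Σ_{j∈S, j≠i₁} (α_j/R_j)·(R_j/R_{i₁} − 1 − (β+γ)/α_j) ≥ 0, and consequently Σ_{i∈S} v({i}) − v(S) ≥ 0. -/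
/-!
Since every ratio `R (i+1) / R i` is at least `1 + (β+γ)/α (i+1) ≥ 1`, the rates increase, so the
rate of a coalition is that of its least member `m` and, for `j > m`,
`R j / R m ≥ R j / R (j-1) ≥ 1 + (β+γ)/α j`. Hence every summand
`(α j / R j) (R j / R m - 1 - (β+γ)/α j)` is nonnegative, and a direct computation shows that these
summands add up to `∑ i ∈ S, v {i} - v S`.
-/

open Finset

theorem MonotoneOn.finset_inf'_eq_min' {α β : Type*} [LinearOrder α] [SemilatticeInf β]
    {f : α → β} {s : Set α} (hf : MonotoneOn f s) {S : Finset α} (hS : ↑S ⊆ s)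
    (hne : S.Nonempty) : S.inf' hne f = f (S.min' hne) :=
  le_antisymm (inf'_le f (min'_mem S hne)) <| le_inf' hne f fun _ hi =>
    hf (hS (min'_mem S hne)) (hS hi) (min'_le S _ hi)

theorem sum_sub_coalition_eq_sum_erase {ι : Type*} [DecidableEq ι] {S : Finset ι} {m : ι}
    (hm : m ∈ S) (U R a : ι → ℝ) (c : ℝ) (hR : ∀ i ∈ S, R i ≠ 0) (ha : ∀ i ∈ S, a i ≠ 0) :
    ∑ i ∈ S, (U i - a i / R i - c / R i) - (∑ i ∈ S, U i - (∑ i ∈ S, a i) / R m - c / R m) =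
      ∑ j ∈ S.erase m, a j / R j * (R j / R m - 1 - c / a j) := by
  have hterm : ∀ j ∈ S.erase m,
      a j / R j * (R j / R m - 1 - c / a j) = a j / R m - a j / R j - c / R j := by
    intro j hj
    have hRj := hR j (mem_of_mem_erase hj)
    have haj := ha j (mem_of_mem_erase hj)
    field_simp
  rw [sum_congr rfl hterm, sum_erase_eq_sub hm]
  simp only [sum_sub_distrib, sum_div]
  ring

theorem one_add_div_le_of_ratio_ge {a c r : ℝ} (ha : 0 < a) (h : r ≥ (a + c) / a) :
    1 + c / a ≤ r := by
  rwa [add_div, div_self ha.ne'] at h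

section RateRatio

variable {n : ℕ} {R α : ℕ → ℝ} {c : ℝ}

theorem monotoneOn_Icc_of_ratio_ge (hR : ∀ i, 0 < R i) (hα : ∀ i, 0 < α i) (hc : 0 ≤ c)
    (hratio : ∀ i, 1 ≤ i → i + 1 ≤ n → R (i + 1) / R i ≥ (α (i + 1) + c) / α (i + 1)) :
    MonotoneOn R (Set.Icc 1 n) := by
  refine monotoneOn_of_le_succ Set.ordConnected_Icc fun i _ hi hi' => ?_
  rw [Order.succ_eq_add_one] at hi' ⊢
  have h := one_add_div_le_of_ratio_ge (hα (i + 1)) (hratio i hi.1 hi'.2)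
  have : 0 ≤ c / α (i + 1) := div_nonneg hc (hα _).le
  exact (one_le_div (hR i)).mp (by linarith)

theorem one_add_div_le_div_of_lt (hR : ∀ i, 0 < R i) (hα : ∀ i, 0 < α i) (hc : 0 ≤ c)
    (hratio : ∀ i, 1 ≤ i → i + 1 ≤ n → R (i + 1) / R i ≥ (α (i + 1) + c) / α (i + 1))
    {m j : ℕ} (hm : m ∈ Set.Icc 1 n) (hj : j ∈ Set.Icc 1 n) (hmj : m < j) :
    1 + c / α j ≤ R j / R m := by
  obtain ⟨k, rfl⟩ : ∃ k, j = k + 1 := ⟨j - 1, by omega⟩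
  have hmk : m ≤ k := Nat.lt_succ_iff.mp hmj
  have hk : k ∈ Set.Icc 1 n := ⟨hm.1.trans hmk, by have := hj.2; omega⟩
  have hRmk : R m ≤ R k := monotoneOn_Icc_of_ratio_ge hR hα hc hratio hm hk hmk
  calc 1 + c / α (k + 1) ≤ R (k + 1) / R k := one_add_div_le_of_ratio_ge (hα _) (hratio k hk.1 hj.2)
    _ ≤ R (k + 1) / R m := div_le_div_of_nonneg_left (hR _).le (hR m) hRmk

end RateRatio

theorem stmt13_general (n : ℕ) (U R αp : ℕ → ℝ) (β γ : ℝ)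
    (hR : ∀ i, 0 < R i) (hαp : ∀ i, 0 < αp i) (hβ : 0 ≤ β) (hγ : 0 ≤ γ)
    (hratio : ∀ i, 1 ≤ i → i + 1 ≤ n →
      R (i + 1) / R i ≥ (αp (i + 1) + β + γ) / αp (i + 1))
    (v : Finset ℕ → ℝ)
    (hv : ∀ (S : Finset ℕ) (h : S.Nonempty),
      v S = ∑ i ∈ S, U i - (∑ i ∈ S, αp i) / S.inf' h R - (β + γ) / S.inf' h R) :
    ∀ S ⊆ Finset.Icc 1 n, ∀ hS : S.Nonempty, 2 ≤ S.card →
      0 ≤ ∑ j ∈ S.erase (S.min' hS),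
            (αp j / R j) * (R j / R (S.min' hS) - 1 - (β + γ) / αp j) ∧
      0 ≤ (∑ i ∈ S, v {i}) - v S := by
  intro S hSub hS _
  have hc : 0 ≤ β + γ := add_nonneg hβ hγ
  have hratio' : ∀ i, 1 ≤ i → i + 1 ≤ n →
      R (i + 1) / R i ≥ (αp (i + 1) + (β + γ)) / αp (i + 1) := by
    simpa only [← add_assoc] using hratio
  have hSIcc : ↑S ⊆ Set.Icc 1 n := by simpa [← coe_Icc] using hSub
  have hmS := min'_mem S hS
  have hsummand : ∀ j ∈ S.erase (S.min' hS),
      0 ≤ (αp j / R j) * (R j / R (S.min' hS) - 1 - (β + γ) / αp j) := fun j hj =>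
    mul_nonneg (div_pos (hαp j) (hR j)).le <| by
      have := one_add_div_le_div_of_lt hR hαp hc hratio' (hSIcc hmS)
        (hSIcc (mem_of_mem_erase hj)) (S.min'_lt_of_mem_erase_min' hS hj)
      linarith
  have hsingleton : ∀ i, v {i} = U i - αp i / R i - (β + γ) / R i := fun i => by
    simp [hv {i} (singleton_nonempty i)]
  refine ⟨sum_nonneg hsummand, ?_⟩
  rw [hv S hS, (monotoneOn_Icc_of_ratio_ge hR hαp hc hratio').finset_inf'_eq_min' hSIcc hS,
    sum_congr rfl fun i _ => hsingleton i, sum_sub_coalition_eq_sum_erase hmS U R αp (β + γ)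
      (fun i _ => (hR i).ne') fun i _ => (hαp i).ne']
  exact sum_nonneg hsummand

/-- Under the consecutive-rate-ratio condition, for any coalition `S ⊆ {1,…,n}`
with at least two members and minimum element `i₁ = min S`, the sum
`∑_{j∈S, j≠i₁} (α_j/R_j)(R_j/R_{i₁} − 1 − (β+γ)/α_j)` is nonnegative, and
consequently `∑_{i∈S} v({i}) − v(S) ≥ 0`. -/
theorem stmt13 (n : ℕ) (hn : 2 ≤ n) (U R αp : ℕ → ℝ) (β γ : ℝ)
    (hR : ∀ i, 0 < R i) (hαp : ∀ i, 0 < αp i) (hβ : 0 ≤ β) (hγ : 0 ≤ γ)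
    (hratio : ∀ i, 1 ≤ i → i + 1 ≤ n →
      R (i + 1) / R i ≥ (αp (i + 1) + β + γ) / αp (i + 1))
    (v : Finset ℕ → ℝ) (hv0 : v ∅ = 0)
    (hv : ∀ (S : Finset ℕ) (h : S.Nonempty),
      v S = ∑ i ∈ S, U i - (∑ i ∈ S, αp i) / S.inf' h R - (β + γ) / S.inf' h R) :
    ∀ S ⊆ Finset.Icc 1 n, ∀ hS : S.Nonempty, 2 ≤ S.card →
      0 ≤ ∑ j ∈ S.erase (S.min' hS),
            (αp j / R j) * (R j / R (S.min' hS) - 1 - (β + γ) / αp j) ∧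
      0 ≤ (∑ i ∈ S, v {i}) - v S :=
  stmt13_general n U R αp β γ hR hαp hβ hγ hratio v hv
end

section
/- Let N = {1,…,n}, n ≥ 2, with value function v(S) = Σ_{i∈S} U_i − Σ_{i∈S} α_i/R_S − (β+γ)/R_S for nonempty S ⊆ N, where R_S = min_{i∈S} R_i, R_i > 0, α_i > 0, β, γ ≥ 0, U_i ∈ ℝ. Fix any proper nonempty subset S ⊊ N, let R_min = min_{i∈N} R_i, R_max = max_{i∈N} R_i, α_min = min_i α_i, α_max = max_i α_i. If R_max/R_min ≤ (n/|S|)·(α_min|S| + β + γ)/(α_max·n + β + γ), then Σ_{i∈S} U_i − |S|(α_max·n + β + γ)/(n·R_min) ≥ v(S). -/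
/-!
The bounded rate disparity says exactly that the uniform penalty `|S|·(α_max n + β + γ)/(n R_min)`
charged to `S` is at most `(α_min |S| + β + γ)/R_max`. Replacing `R_max` by the smaller `R_S` and
`α_min |S|` by the larger `Σ_{i∈S} α_i` only increases this bound, and the result is the cost term
of `v S`.
-/

theorem mul_div_le_div_of_ratio_le {k n A B Rmin Rmax r : ℝ} (hk : 0 < k) (hn : 0 < n)
    (hA : 0 < A) (hRmin : 0 < Rmin) (hr : 0 < r) (hrRmax : r ≤ Rmax)
    (hcond : Rmax / Rmin ≤ n / k * (B / A)) :
    k * A / (n * Rmin) ≤ B / r := by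
  have hRmax : 0 < Rmax := hr.trans_le hrRmax
  have hcross : Rmax * (k * A) ≤ B * (n * Rmin) := by
    rw [div_le_iff₀ hRmin, div_mul_div_comm, div_mul_eq_mul_div, le_div_iff₀ (by positivity)]
      at hcond
    linarith
  have hB : 0 ≤ B := by
    by_contra! hB
    nlinarith [mul_pos hRmax (mul_pos hk hA), mul_pos hn hRmin]
  calc k * A / (n * Rmin) ≤ B / Rmax := by
        rw [div_le_div_iff₀ (by positivity) hRmax]; linarith
    _ ≤ B / r := div_le_div_of_nonneg_left hB hr hrRmax

theorem stmt15_general (n : ℕ) (U R αp : ℕ → ℝ) (β γ : ℝ)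
    (hR : ∀ i, 0 < R i) (hαp : ∀ i, 0 < αp i) (hβ : 0 ≤ β) (hγ : 0 ≤ γ)
    (v : Finset ℕ → ℝ)
    (hv : ∀ (T : Finset ℕ) (h : T.Nonempty),
      v T = ∑ i ∈ T, U i - (∑ i ∈ T, αp i) / T.inf' h R - (β + γ) / T.inf' h R)
    (hNne : (Finset.Icc 1 n).Nonempty)
    (S : Finset ℕ) (hS : S ⊆ Finset.Icc 1 n) (hSne : S.Nonempty)
    (Rmin Rmax αmin αmax : ℝ)
    (hRmin : Rmin = (Finset.Icc 1 n).inf' hNne R)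
    (hRmax : Rmax = (Finset.Icc 1 n).sup' hNne R)
    (hαmin : αmin = (Finset.Icc 1 n).inf' hNne αp)
    (hαmax : αmax = (Finset.Icc 1 n).sup' hNne αp)
    (hcond : Rmax / Rmin ≤
      ((n : ℝ) / (S.card : ℝ)) * ((αmin * S.card + β + γ) / (αmax * n + β + γ))) :
    (∑ i ∈ S, U i) - S.card * (αmax * n + β + γ) / (n * Rmin) ≥ v S := by
  obtain ⟨j, hj⟩ := id hSne
  have hn : (0 : ℝ) < n := Nat.cast_pos.2 (Finset.nonempty_Icc.mp hNne)
  have hRS : 0 < S.inf' hSne R := (Finset.lt_inf'_iff _).2 fun i _ => hR i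
  have hRSmax : S.inf' hSne R ≤ Rmax :=
    hRmax ▸ (S.inf'_le R hj).trans ((Finset.Icc 1 n).le_sup' R (hS hj))
  have hRmin_pos : 0 < Rmin := hRmin ▸ (Finset.lt_inf'_iff _).2 fun i _ => hR i
  have hαmax_pos : 0 < αmax := hαmax ▸ (Finset.lt_sup'_iff _).2 ⟨j, hS hj, hαp j⟩
  have hsum : αmin * S.card ≤ ∑ i ∈ S, αp i := by
    rw [mul_comm, ← nsmul_eq_mul]
    exact S.card_nsmul_le_sum αp αmin fun i hi => hαmin ▸ Finset.inf'_le αp (hS hi)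
  have hcard : (0 : ℝ) < S.card := Nat.cast_pos.2 (Finset.card_pos.2 hSne)
  have hcost : S.card * (αmax * n + β + γ) / (n * Rmin) ≤
      (∑ i ∈ S, αp i + (β + γ)) / S.inf' hSne R :=
    (mul_div_le_div_of_ratio_le hcard hn (by positivity) hRmin_pos hRS hRSmax hcond).trans
      (div_le_div_of_nonneg_right (by linarith) hRS.le)
  rw [add_div] at hcost
  rw [hv S hSne]
  linarith

/-- Key step for non-emptiness of the core: for a proper nonempty coalition
`S ⊊ N = {1,…,n}`, under the rate-disparity bound the candidate core payoff of
`S` is at least `v S`. -/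
theorem stmt15 (n : ℕ) (hn : 2 ≤ n) (U R αp : ℕ → ℝ) (β γ : ℝ)
    (hR : ∀ i, 0 < R i) (hαp : ∀ i, 0 < αp i) (hβ : 0 ≤ β) (hγ : 0 ≤ γ)
    (v : Finset ℕ → ℝ) (hv0 : v ∅ = 0)
    (hv : ∀ (T : Finset ℕ) (h : T.Nonempty),
      v T = ∑ i ∈ T, U i - (∑ i ∈ T, αp i) / T.inf' h R - (β + γ) / T.inf' h R)
    (hNne : (Finset.Icc 1 n).Nonempty)
    (S : Finset ℕ) (hS : S ⊆ Finset.Icc 1 n) (hSne : S.Nonempty)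
    (hproper : S ≠ Finset.Icc 1 n)
    (Rmin Rmax αmin αmax : ℝ)
    (hRmin : Rmin = (Finset.Icc 1 n).inf' hNne R)
    (hRmax : Rmax = (Finset.Icc 1 n).sup' hNne R)
    (hαmin : αmin = (Finset.Icc 1 n).inf' hNne αp)
    (hαmax : αmax = (Finset.Icc 1 n).sup' hNne αp)
    (hcond : Rmax / Rmin ≤
      ((n : ℝ) / (S.card : ℝ)) * ((αmin * S.card + β + γ) / (αmax * n + β + γ))) :
    (∑ i ∈ S, U i) - S.card * (αmax * n + β + γ) / (n * Rmin) ≥ v S :=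
  stmt15_general n U R αp β γ hR hαp hβ hγ v hv hNne S hS hSne Rmin Rmax αmin αmax hRmin hRmax hαmin
    hαmax hcond
end
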